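/- Under the assumptions that f is convex with L-Lipschitz gradient and X is compact convex with diameter D, the AFW algorithm with δ_k = 2/(k+3) and θ₀ = 0 satisfies f(x_k) − f(x*) ≤ 2(f(x₀) − f(x*))/((k+1)(k+2)) + 2LD²/(k+2) for all k. -/

import Mathlib

open scoped RealInnerProductSpace

variable {d : ℕ}

lemma line_hasDerivAt (f : EuclideanSpace ℝ (Fin d) → ℝ)
    (g : EuclideanSpace ℝ (Fin d) → EuclideanSpace ℝ (Fin d))
    (hgrad : ∀ x, HasGradientAt f (g x) x) (a z : EuclideanSpace ℝ (Fin d)) (t : ℝ) :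
    HasDerivAt (fun s : ℝ => f (a + s • (z - a))) ⟪g (a + t • (z - a)), z - a⟫ t := by
  have h1 : HasDerivAt (fun s : ℝ => a + s • (z - a)) (z - a) t := by
    simpa using ((hasDerivAt_id t).smul_const (z - a)).const_add a
  have h2 := ((hgrad (a + t • (z - a))).hasFDerivAt).comp_hasDerivAt t h1
  simpa [InnerProductSpace.toDual_apply_apply, Function.comp_def] using h2

lemma grad_ineq (f : EuclideanSpace ℝ (Fin d) → ℝ)
    (g : EuclideanSpace ℝ (Fin d) → EuclideanSpace ℝ (Fin d))
    (hconv : ConvexOn ℝ Set.univ f) (hgrad : ∀ x, HasGradientAt f (g x) x)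
    (a z : EuclideanSpace ℝ (Fin d)) :
    f a + ⟪g a, z - a⟫ ≤ f z := by
  have hc : ConvexOn ℝ Set.univ (fun s : ℝ => f (a + s • (z - a))) := by
    have := hconv.comp_affineMap (AffineMap.lineMap a z)
    simp only [Set.preimage_univ] at this
    have heq : (f ∘ (AffineMap.lineMap a z)) = fun s : ℝ => f (a + s • (z - a)) := by
      funext s
      show f _ = f _
      congr 1
      rw [AffineMap.lineMap_apply]
      show s • (z - a) + a = a + s • (z - a)
      module
    rwa [heq] at this
  have hd := line_hasDerivAt f g hgrad a z 0
  simp only [zero_smul, add_zero] at hd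
  have := hc.le_slope_of_hasDerivAt (Set.mem_univ (0:ℝ)) (Set.mem_univ (1:ℝ))
    one_pos hd
  have hs : slope (fun s : ℝ => f (a + s • (z - a))) 0 1 = f z - f a := by
    simp [slope_def_field]
  rw [hs] at this
  linarith

lemma descent_lemma (f : EuclideanSpace ℝ (Fin d) → ℝ)
    (g : EuclideanSpace ℝ (Fin d) → EuclideanSpace ℝ (Fin d)) (L : ℝ) (hL : 0 ≤ L)
    (hgrad : ∀ x, HasGradientAt f (g x) x)
    (hlip : ∀ x y, ‖g x - g y‖ ≤ L * ‖x - y‖)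
    (a b : EuclideanSpace ℝ (Fin d)) :
    f b ≤ f a + ⟪g a, b - a⟫ + L / 2 * ‖b - a‖ ^ 2 := by
  set p : ℝ → EuclideanSpace ℝ (Fin d) := fun t => a + t • (b - a) with hp
  have hgc : Continuous g := by
    have : LipschitzWith (Real.toNNReal L) g := by
      apply LipschitzWith.of_dist_le_mul
      intro u w
      rw [dist_eq_norm, dist_eq_norm]
      calc ‖g u - g w‖ ≤ L * ‖u - w‖ := hlip u w
        _ = (Real.toNNReal L) * ‖u - w‖ := by rw [Real.coe_toNNReal L hL]
    exact this.continuous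
  have hpc : Continuous p := by continuity
  have hcont : Continuous (fun t : ℝ => ⟪g (p t), b - a⟫) :=
    (hgc.comp hpc).inner continuous_const
  have hint : IntervalIntegrable (fun t : ℝ => ⟪g (p t), b - a⟫)
      MeasureTheory.volume 0 1 := hcont.intervalIntegrable 0 1
  have hFTC : f (p 1) - f (p 0) = ∫ t in (0:ℝ)..1, ⟪g (p t), b - a⟫ := by
    rw [← intervalIntegral.integral_eq_sub_of_hasDerivAt
      (fun t _ => line_hasDerivAt f g hgrad a b t) hint]
  have hp0 : p 0 = a := by simp [hp]
  have hp1 : p 1 = b := by simp [hp]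
  have hmono : (∫ t in (0:ℝ)..1, ⟪g (p t), b - a⟫)
      ≤ ∫ t in (0:ℝ)..1, (⟪g a, b - a⟫ + L * ‖b - a‖ ^ 2 * t) := by
    apply intervalIntegral.integral_mono_on (by norm_num) hint
    · exact Continuous.intervalIntegrable (by continuity) 0 1
    · intro t ht
      have h1 : ⟪g (p t), b - a⟫ - ⟪g a, b - a⟫ = ⟪g (p t) - g a, b - a⟫ := by
        rw [inner_sub_left]
      have h2 : ⟪g (p t) - g a, b - a⟫ ≤ ‖g (p t) - g a‖ * ‖b - a‖ := real_inner_le_norm _ _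
      have h3 : ‖g (p t) - g a‖ ≤ L * (t * ‖b - a‖) := by
        have := hlip (p t) a
        have hpa : ‖p t - a‖ = t * ‖b - a‖ := by
          simp [hp, norm_smul, abs_of_nonneg ht.1]
        rw [hpa] at this; exact this
      have hbn : (0:ℝ) ≤ ‖b - a‖ := norm_nonneg _
      nlinarith [norm_nonneg (g (p t) - g a)]
  have hval : (∫ t in (0:ℝ)..1, (⟪g a, b - a⟫ + L * ‖b - a‖ ^ 2 * t))
      = ⟪g a, b - a⟫ + L / 2 * ‖b - a‖ ^ 2 := by
    rw [intervalIntegral.integral_add (continuous_const.intervalIntegrable 0 1)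
      (Continuous.intervalIntegrable (by continuity) 0 1)]
    rw [intervalIntegral.integral_const_mul, integral_id, intervalIntegral.integral_const]
    simp
    ring
  rw [hp0, hp1] at hFTC
  linarith [hmono.trans_eq hval, hFTC.ge, hFTC.le]

set_option maxHeartbeats 1000000

theorem stmt8 {d : ℕ} (f : EuclideanSpace ℝ (Fin d) → ℝ)
    (g : EuclideanSpace ℝ (Fin d) → EuclideanSpace ℝ (Fin d)) (L D : ℝ)
    (hL : 0 < L) (hD : 0 < D)
    (hgrad : ∀ x, HasGradientAt f (g x) x)
    (hconv : ConvexOn ℝ Set.univ f)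
    (hlip : ∀ x y, ‖g x - g y‖ ≤ L * ‖x - y‖)
    (X : Set (EuclideanSpace ℝ (Fin d))) (hXc : IsCompact X) (hX : Convex ℝ X)
    (hdiam : ∀ x ∈ X, ∀ y ∈ X, ‖x - y‖ ≤ D)
    (xstar : EuclideanSpace ℝ (Fin d)) (hxs : xstar ∈ X)
    (hmin : ∀ z ∈ X, f xstar ≤ f z)
    (δ : ℕ → ℝ) (hδ : ∀ k : ℕ, δ k = 2 / ((k : ℝ) + 3))
    (x y v θ : ℕ → EuclideanSpace ℝ (Fin d))
    (hx0 : x 0 ∈ X) (hv0 : v 0 = x 0) (hθ0 : θ 0 = 0)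
    (hy : ∀ k, y k = (1 - δ k) • x k + δ k • v k)
    (hθ : ∀ k, θ (k + 1) = (1 - δ k) • θ k + δ k • g (y k))
    (hvmem : ∀ k, v (k + 1) ∈ X)
    (hvmin : ∀ k, ∀ z ∈ X, ⟪θ (k + 1), v (k + 1)⟫ ≤ ⟪θ (k + 1), z⟫)
    (hx : ∀ k, x (k + 1) = (1 - δ k) • x k + δ k • v (k + 1)) :
    ∀ k : ℕ, f (x k) - f xstar ≤
      2 * (f (x 0) - f xstar) / (((k : ℝ) + 1) * ((k : ℝ) + 2)) +
        2 * L * D ^ 2 / ((k : ℝ) + 2) := by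
  have hδpos : ∀ k : ℕ, 0 < δ k := fun k => by
    rw [hδ]; positivity
  have hδlt : ∀ k : ℕ, δ k < 1 := fun k => by
    rw [hδ, div_lt_one (by positivity)]
    have : (0:ℝ) ≤ (k:ℝ) := Nat.cast_nonneg k
    linarith
  have hδ1 : ∀ k : ℕ, (0:ℝ) ≤ 1 - δ k := fun k => by linarith [hδlt k]
  have hvX : ∀ k, v k ∈ X := by
    intro k; cases k with
    | zero => rw [hv0]; exact hx0
    | succ j => exact hvmem j
  have hvle : ∀ k, ∀ z ∈ X, ⟪θ k, v k⟫ ≤ ⟪θ k, z⟫ := by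
    intro k; cases k with
    | zero => intro z hz; simp [hθ0]
    | succ j => exact hvmin j
  have hinner : ∀ (k : ℕ) (z : EuclideanSpace ℝ (Fin d)),
      ⟪θ (k+1), z⟫ = (1 - δ k) * ⟪θ k, z⟫ + δ k * ⟪g (y k), z⟫ := by
    intro k z
    rw [hθ k, inner_add_left, real_inner_smul_left, real_inner_smul_left]
  let β : ℕ → ℝ := fun n =>
    Nat.rec (f (x 0)) (fun k b => (1 - δ k) * b + δ k * (f (y k) - ⟪g (y k), y k⟫)) n
  have hβ0 : β 0 = f (x 0) := rfl
  have hβs : ∀ k, β (k+1) = (1 - δ k) * β k + δ k * (f (y k) - ⟪g (y k), y k⟫) :=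
    fun k => rfl
  clear_value β
  have P1 : ∀ k : ℕ, ⟪θ k, xstar⟫ + β k ≤
      2 / (((k:ℝ)+1)*((k:ℝ)+2)) * f (x 0) + (1 - 2 / (((k:ℝ)+1)*((k:ℝ)+2))) * f xstar := by
    intro k; induction k with
    | zero =>
      simp only [Nat.cast_zero, hθ0, inner_zero_left, hβ0]
      norm_num
    | succ k ih =>
      have hA := grad_ineq f g hconv hgrad (y k) xstar
      have hsub : ⟪g (y k), xstar - y k⟫ = ⟪g (y k), xstar⟫ - ⟪g (y k), y k⟫ :=
        inner_sub_right _ _ _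
      rw [hsub] at hA
      rw [hinner k xstar, hβs k]
      have hk1 : (0:ℝ) < (k:ℝ)+1 := by positivity
      have hk2 : (0:ℝ) < (k:ℝ)+2 := by positivity
      have hk3 : (0:ℝ) < (k:ℝ)+3 := by positivity
      have hΓstep : (1 - δ k) * (2/(((k:ℝ)+1)*((k:ℝ)+2)))
          = 2/(((k:ℝ)+1+1)*((k:ℝ)+1+2)) := by
        rw [hδ]; field_simp; ring
      have h2 := mul_le_mul_of_nonneg_left ih (hδ1 k)
      have h1 := mul_le_mul_of_nonneg_left hA (hδpos k).le
      push_cast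
      rw [← hΓstep]
      nlinarith [h1, h2]
  have P2 : ∀ k : ℕ, f (x k) ≤ ⟪θ k, v k⟫ + β k
      + 2*L*D^2*(k:ℝ)/(((k:ℝ)+1)*((k:ℝ)+2)) := by
    intro k; induction k with
    | zero =>
      simp only [Nat.cast_zero, hθ0, inner_zero_left, hβ0]
      norm_num
    | succ k ih =>
      have hdesc := descent_lemma f g L hL.le hgrad hlip (y k) (x (k+1))
      have hxy : x (k+1) - y k = δ k • (v (k+1) - v k) := by
        rw [hx k, hy k]; module
      have hnorm : ‖x (k+1) - y k‖ ≤ δ k * D := by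
        rw [hxy, norm_smul, Real.norm_eq_abs, abs_of_pos (hδpos k)]
        exact mul_le_mul_of_nonneg_left (hdiam _ (hvmem k) _ (hvX k)) (hδpos k).le
      have hsq : ‖x (k+1) - y k‖^2 ≤ (δ k)^2 * D^2 := by
        nlinarith [norm_nonneg (x (k+1) - y k), hδpos k, hD]
      have hsplit : ⟪g (y k), x (k+1) - y k⟫
          = (1 - δ k) * ⟪g (y k), x k - y k⟫ + δ k * ⟪g (y k), v (k+1) - y k⟫ := by
        have hvec : x (k+1) - y k = (1 - δ k) • (x k - y k) + δ k • (v (k+1) - y k) := by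
          rw [hx k, hy k]; module
        rw [hvec, inner_add_right, real_inner_smul_right, real_inner_smul_right]
      rw [hsplit] at hdesc
      have hsub1 : ⟪g (y k), x k - y k⟫ = ⟪g (y k), x k⟫ - ⟪g (y k), y k⟫ :=
        inner_sub_right _ _ _
      have hsub2 : ⟪g (y k), v (k+1) - y k⟫ = ⟪g (y k), v (k+1)⟫ - ⟪g (y k), y k⟫ :=
        inner_sub_right _ _ _
      rw [hsub1, hsub2] at hdesc
      have hcvx := grad_ineq f g hconv hgrad (y k) (x k)
      rw [inner_sub_right] at hcvx
      have hΦ : (1 - δ k) * ⟪θ k, v k⟫ + δ k * ⟪g (y k), v (k+1)⟫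
          ≤ ⟪θ (k+1), v (k+1)⟫ := by
        rw [hinner k (v (k+1))]
        have h := hvle k (v (k+1)) (hvmem k)
        nlinarith [hδ1 k]
      have hk1 : (0:ℝ) < (k:ℝ)+1 := by positivity
      have hk2 : (0:ℝ) < (k:ℝ)+2 := by positivity
      have hk3 : (0:ℝ) < (k:ℝ)+3 := by positivity
      have hE : (1 - δ k) * (2*L*D^2*(k:ℝ)/(((k:ℝ)+1)*((k:ℝ)+2)))
          + L/2 * ((δ k)^2 * D^2)
          ≤ 2*L*D^2*((k:ℝ)+1)/((((k:ℝ)+1)+1)*(((k:ℝ)+1)+2)) := by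
        rw [hδ]
        have key : 2*L*D^2*((k:ℝ)+1)/((((k:ℝ)+1)+1)*(((k:ℝ)+1)+2))
            - ((1 - 2/((k:ℝ)+3)) * (2*L*D^2*(k:ℝ)/(((k:ℝ)+1)*((k:ℝ)+2)))
              + L/2*((2/((k:ℝ)+3))^2*D^2))
            = 2*L*D^2/(((k:ℝ)+2)*((k:ℝ)+3)^2) := by
          field_simp
          ring
        have hnn : (0:ℝ) ≤ 2*L*D^2/(((k:ℝ)+2)*((k:ℝ)+3)^2) := by positivity
        linarith [key, hnn]
      have h5 := mul_le_mul_of_nonneg_left hcvx (hδ1 k)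
      have h6 := mul_le_mul_of_nonneg_left ih (hδ1 k)
      have h7 := mul_le_mul_of_nonneg_left hsq (by positivity : (0:ℝ) ≤ L/2)
      rw [hβs k]
      have hcast : (((k+1 : ℕ)) : ℝ) = (k:ℝ)+1 := by push_cast; ring
      rw [hcast]
      linarith [hdesc, h5, h6, hΦ, h7, hE]
  intro k
  have h1 := P2 k
  have h2 := P1 k
  have h3 := hvle k xstar hxs
  have hk1 : (0:ℝ) < (k:ℝ)+1 := by positivity
  have hk2 : (0:ℝ) < (k:ℝ)+2 := by positivity
  have hEk : 2*L*D^2*(k:ℝ)/(((k:ℝ)+1)*((k:ℝ)+2)) ≤ 2*L*D^2/((k:ℝ)+2) := by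
    rw [div_le_div_iff₀ (by positivity) (by positivity)]
    have hp : (0:ℝ) ≤ 2*L*D^2*((k:ℝ)+2) := by positivity
    nlinarith [Nat.cast_nonneg (α := ℝ) k]
  have heq : 2 / (((k:ℝ)+1)*((k:ℝ)+2)) * f (x 0)
      + (1 - 2 / (((k:ℝ)+1)*((k:ℝ)+2))) * f xstar - f xstar
      = 2 * (f (x 0) - f xstar) / (((k:ℝ)+1)*((k:ℝ)+2)) := by
    field_simp; ring
  linarith
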